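/- Let c_* := π/(2√2) and η̃(x) := (π² − 4πx + 2x²)/16. Then for every x ∈ (0, 2π) one has (c_*² − 2η̃(x))·η̃''(x) − (η̃'(x))² + η̃(x) = 0; that is, the peaked periodic profile solves the traveling-wave equation with speed c_* away from its peaks. -/

import Mathlib

open Real

/-- The limiting wave speed `c_* = π/(2√2)`. -/
noncomputable def cStar : ℝ := π / (2 * Real.sqrt 2)

/-- The peaked periodic profile written on the period `[0, 2π]`
(peaks at the endpoints). -/
noncomputable def etaTilde (x : ℝ) : ℝ := (π ^ 2 - 4 * π * x + 2 * x ^ 2) / 16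

/-! The profile is a quadratic with `η̃'' ≡ 1/4`, so the equation reduces to
`c_*²/4 + η̃/2 = η̃'²`, a polynomial identity in `x` once `c_*² = π²/8`. -/

lemma cStar_sq : cStar ^ 2 = π ^ 2 / 8 := by
  rw [cStar, div_pow, mul_pow, sq_sqrt zero_le_two]
  norm_num

lemma etaTilde_eq (x : ℝ) : etaTilde x = (x - π) ^ 2 / 8 - π ^ 2 / 16 := by
  rw [etaTilde]
  ring

lemma hasDerivAt_etaTilde (x : ℝ) : HasDerivAt etaTilde ((x - π) / 4) x := by
  rw [show etaTilde = fun y => (y - π) ^ 2 / 8 - π ^ 2 / 16 from funext etaTilde_eq]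
  exact (((((hasDerivAt_id' x).sub_const π).fun_pow 2).div_const 8).sub_const
    (π ^ 2 / 16)).congr_deriv (by push_cast; ring)

lemma deriv_etaTilde : deriv etaTilde = fun x => (x - π) / 4 :=
  funext fun x => (hasDerivAt_etaTilde x).deriv

lemma deriv_deriv_etaTilde : deriv (deriv etaTilde) = fun _ => 1 / 4 := by
  rw [deriv_etaTilde]
  funext x
  exact (((hasDerivAt_id x).sub_const π).div_const 4).deriv

theorem peaked_profile_solves_TW : ∀ x ∈ Set.Ioo (0:ℝ) (2 * π),
    (cStar ^ 2 - 2 * etaTilde x) * deriv (deriv etaTilde) x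
      - (deriv etaTilde x) ^ 2 + etaTilde x = 0 := by
  intro x _
  rw [deriv_deriv_etaTilde, deriv_etaTilde, cStar_sq, etaTilde]
  ring
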